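/- arXiv:2406.19463 — 4 statements merged into one kernel-verified Lean document; each statement's English description precedes it below -/
import Mathlib

section
/- Let T be an antiunitary operator on a complex Hilbert space H with T² = λΘ where Θ is a unitary with Θ² = I and λ is a unimodular complex number. If Ω is a unit vector with ΘΩ = Ω and Θ(TΩ) = TΩ, then λ is real, i.e. λ ∈ {+1,-1}. -/
open scoped ComplexInnerProductSpace

/-!
Apply `T` to `T² Ω = λ Ω`: antilinearity gives `T³ Ω = conj λ • T Ω`, while `Θ (T Ω) = T Ω`
gives `T³ Ω = T² (T Ω) = λ • T Ω`. Since `T (T Ω) = λ Ω ≠ 0` forces `T Ω ≠ 0`, `λ` equals its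
conjugate, and a real number of modulus one is `±1`.
-/

section Antilinear

variable {E : Type*} [AddCommGroup E] [Module ℂ E] {T : E → E}

theorem map_zero_of_map_smul_conj (hsmul : ∀ (c : ℂ) (x : E), T (c • x) = (starRingEnd ℂ) c • T x) :
    T 0 = 0 := by
  simpa using hsmul 0 0

theorem conj_eq_of_map_map_eq_smul (hsmul : ∀ (c : ℂ) (x : E), T (c • x) = (starRingEnd ℂ) c • T x)
    {l : ℂ} {x : E} (hx : T (T x) = l • x) (hTx : T (T (T x)) = l • T x) (hlx : l • x ≠ 0) :
    (starRingEnd ℂ) l = l := by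
  have hTx_ne : T x ≠ 0 := fun h => hlx (by rw [← hx, h, map_zero_of_map_smul_conj hsmul])
  have h : ((starRingEnd ℂ) l - l) • T x = 0 := by
    rw [sub_smul, ← hsmul, ← hx, hTx, sub_self]
  exact sub_eq_zero.1 ((smul_eq_zero.1 h).resolve_right hTx_ne)

end Antilinear

theorem Complex.eq_one_or_eq_neg_one_of_conj_eq_of_norm_eq_one {l : ℂ}
    (hconj : (starRingEnd ℂ) l = l) (hl : ‖l‖ = 1) : l = 1 ∨ l = -1 := by
  obtain ⟨r, rfl⟩ := Complex.conj_eq_iff_real.1 hconj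
  rw [Complex.norm_real, Real.norm_eq_abs] at hl
  rcases abs_eq zero_le_one |>.1 hl with rfl | rfl
  · exact Or.inl Complex.ofReal_one
  · exact Or.inr (by push_cast; rfl)

theorem antiunitary_square_phase_real_general
    {H : Type*} [NormedAddCommGroup H] [InnerProductSpace ℂ H]
    (T : H → H)
    (hsmul : ∀ (c : ℂ) (x : H), T (c • x) = (starRingEnd ℂ) c • T x)
    (Θ : H →L[ℂ] H)
    (l : ℂ) (hl : ‖l‖ = 1)
    (hT2 : ∀ x, T (T x) = l • Θ x)
    (Ω : H) (hΩ : ‖Ω‖ = 1)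
    (hΘΩ : Θ Ω = Ω)
    (hΘTΩ : Θ (T Ω) = T Ω) :
    l = 1 ∨ l = -1 := by
  have hl0 : l ≠ 0 := norm_ne_zero_iff.1 (hl ▸ one_ne_zero)
  have hΩ0 : Ω ≠ 0 := norm_ne_zero_iff.1 (hΩ ▸ one_ne_zero)
  refine Complex.eq_one_or_eq_neg_one_of_conj_eq_of_norm_eq_one ?_ hl
  exact conj_eq_of_map_map_eq_smul hsmul (by rw [hT2, hΘΩ]) (by rw [hT2, hΘTΩ])
    (smul_ne_zero hl0 hΩ0)

/-- If `T` is antiunitary with `T² = λΘ` where `Θ` is a unitary with `Θ² = I` and `|λ| = 1`,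
and `Ω` is a unit vector with `ΘΩ = Ω` and `Θ(TΩ) = TΩ`, then `λ ∈ {+1, -1}`. -/
theorem antiunitary_square_phase_real
    {H : Type*} [NormedAddCommGroup H] [InnerProductSpace ℂ H] [CompleteSpace H]
    (T : H → H)
    (hadd : ∀ x y, T (x + y) = T x + T y)
    (hsmul : ∀ (c : ℂ) (x : H), T (c • x) = (starRingEnd ℂ) c • T x)
    (hbij : Function.Bijective T)
    (hinner : ∀ x y, ⟪T x, T y⟫ = ⟪y, x⟫)
    (Θ : H →L[ℂ] H)
    (hΘinner : ∀ x y, ⟪Θ x, Θ y⟫ = ⟪x, y⟫)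
    (hΘsurj : Function.Surjective Θ)
    (hΘ2 : Θ * Θ = 1)
    (l : ℂ) (hl : ‖l‖ = 1)
    (hT2 : ∀ x, T (T x) = l • Θ x)
    (Ω : H) (hΩ : ‖Ω‖ = 1)
    (hΘΩ : Θ Ω = Ω)
    (hΘTΩ : Θ (T Ω) = T Ω) :
    l = 1 ∨ l = -1 :=
  antiunitary_square_phase_real_general T hsmul Θ l hl hT2 Ω hΩ hΘΩ hΘTΩ
end

section
/- Let P and Q be orthogonal projections on a Hilbert space and let N be an orthogonal projection onto a subspace of the kernel of Q - P - I, i.e. N(Q - P)N = N. Then N is a subprojection of Q (QN = NQ = N) and N is orthogonal to P (PN = NP = 0). -/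
open scoped ComplexInnerProductSpace

private lemma proj_inner_eq {H : Type*} [NormedAddCommGroup H] [InnerProductSpace ℂ H]
    [CompleteSpace H] (A : H →L[ℂ] H) (hsa : IsSelfAdjoint A) (hid : IsIdempotentElem A)
    (x : H) : ⟪x, A x⟫ = (‖A x‖ ^ 2 : ℂ) := by
  have h1 : ⟪x, A x⟫ = ⟪A x, A x⟫ := by
    nth_rewrite 1 [← hid.eq]
    simp only [ContinuousLinearMap.mul_apply]
    rw [← ContinuousLinearMap.adjoint_inner_left, hsa.adjoint_eq]
  rw [h1, inner_self_eq_norm_sq_to_K]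
  norm_cast

/-- If `P`, `Q`, `N` are orthogonal projections and `N(Q - P)N = N`, then `N` is a
subprojection of `Q` and `N` is orthogonal to `P`. -/
theorem subprojection_of_kernel_plus_one
    {H : Type*} [NormedAddCommGroup H] [InnerProductSpace ℂ H] [CompleteSpace H]
    (P Q N : H →L[ℂ] H)
    (hPsa : IsSelfAdjoint P) (hPid : IsIdempotentElem P)
    (hQsa : IsSelfAdjoint Q) (hQid : IsIdempotentElem Q)
    (hNsa : IsSelfAdjoint N) (hNid : IsIdempotentElem N)
    (h : N * (Q - P) * N = N) :
    Q * N = N ∧ N * Q = N ∧ P * N = 0 ∧ N * P = 0 := by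
  have main : ∀ y : H, P (N y) = 0 ∧ Q (N y) = N y := by
    intro y
    set x := N y with hxdef
    have hNx : N x = x := by
      have := congrArg (fun T : H →L[ℂ] H => T y) hNid.eq
      simpa [ContinuousLinearMap.mul_apply] using this
    have hkey : ⟪x, (Q - P) x⟫ = (‖x‖ ^ 2 : ℂ) := by
      have hap : N ((Q - P) x) = x := by
        have := congrArg (fun T : H →L[ℂ] H => T y) h
        simpa [ContinuousLinearMap.mul_apply] using this
      calc ⟪x, (Q - P) x⟫ = ⟪N x, (Q - P) x⟫ := by rw [hNx]
        _ = ⟪x, N ((Q - P) x)⟫ := by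
              conv_lhs => rw [← hNsa.adjoint_eq]
              rw [ContinuousLinearMap.adjoint_inner_left]
        _ = ⟪x, x⟫ := by rw [hap]
        _ = (‖x‖ ^ 2 : ℂ) := inner_self_eq_norm_sq_to_K x
    have hQi := proj_inner_eq Q hQsa hQid x
    have hPi := proj_inner_eq P hPsa hPid x
    have hsplit : ⟪x, (Q - P) x⟫ = ⟪x, Q x⟫ - ⟪x, P x⟫ := by
      simp [inner_sub_right]
    have hC : (‖Q x‖ ^ 2 : ℂ) - (‖P x‖ ^ 2 : ℂ) = (‖x‖ ^ 2 : ℂ) := by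
      rw [← hQi, ← hPi, ← hsplit, hkey]
    have hR : ‖Q x‖ ^ 2 - ‖P x‖ ^ 2 = ‖x‖ ^ 2 := by exact_mod_cast hC
    have hCS : ‖Q x‖ ^ 2 ≤ ‖x‖ * ‖Q x‖ := by
      have h1 := norm_inner_le_norm (𝕜 := ℂ) x (Q x)
      have h2 : ‖⟪x, Q x⟫‖ = ‖Q x‖ ^ 2 := by
        rw [hQi]
        simp [abs_of_nonneg, sq_nonneg]
      linarith [h1, h2.symm.le, h2.ge]
    have hP0 : ‖P x‖ = 0 := by
      nlinarith [norm_nonneg (P x), norm_nonneg (Q x), norm_nonneg x,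
        sq_nonneg (‖Q x‖ - ‖x‖)]
    have hQnorm : ‖Q x‖ = ‖x‖ := by
      nlinarith [norm_nonneg (Q x), norm_nonneg x]
    have hPx : P x = 0 := norm_eq_zero.mp hP0
    have hQx : Q x = x := by
      have hre : RCLike.re (⟪Q x, x⟫ : ℂ) = ‖Q x‖ ^ 2 := by
        rw [← inner_conj_symm, hQi]
        simp only [map_pow, Complex.conj_ofReal, RCLike.re_to_complex, ← Complex.ofReal_pow,
          Complex.ofReal_re]
      have hnorm : ‖Q x - x‖ ^ 2 = 0 := by
        rw [@norm_sub_sq ℂ]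
        rw [hre, hQnorm]
        ring
      have := (pow_eq_zero_iff (n := 2) (by norm_num)).mp hnorm
      have := norm_eq_zero.mp this
      exact sub_eq_zero.mp this
    exact ⟨hPx, hQx⟩
  have hQN : Q * N = N := by
    ext y; exact (main y).2
  have hPN : P * N = 0 := by
    ext y; exact (main y).1
  refine ⟨hQN, ?_, hPN, ?_⟩
  · have := congrArg star hQN
    rwa [star_mul, hNsa.star_eq, hQsa.star_eq] at this
  · have := congrArg star hPN
    rwa [star_mul, hNsa.star_eq, hPsa.star_eq, star_zero] at this
end

section
/- Let P and Q be orthogonal projections on a Hilbert space and let N be an orthogonal projection with N(Q - P)N = -N. Then QN = NQ = 0 and PN = NP = N. -/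
open scoped ComplexInnerProductSpace

/-- If `P`, `Q`, `N` are orthogonal projections and `N(Q - P)N = -N`, then `N` is
orthogonal to `Q` and `N` is a subprojection of `P`. -/
theorem subprojection_of_kernel_minus_one
    {H : Type*} [NormedAddCommGroup H] [InnerProductSpace ℂ H] [CompleteSpace H]
    (P Q N : H →L[ℂ] H)
    (hPsa : IsSelfAdjoint P) (hPid : IsIdempotentElem P)
    (hQsa : IsSelfAdjoint Q) (hQid : IsIdempotentElem Q)
    (hNsa : IsSelfAdjoint N) (hNid : IsIdempotentElem N)
    (h : N * (Q - P) * N = -N) :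
    Q * N = 0 ∧ N * Q = 0 ∧ P * N = N ∧ N * P = N := by
  have hsa : ∀ (T : H →L[ℂ] H), IsSelfAdjoint T → ∀ u v : H, (⟪T u, v⟫) = (⟪u, T v⟫) := by
    intro T hT u v
    conv_lhs => rw [← hT.adjoint_eq]
    exact ContinuousLinearMap.adjoint_inner_left T v u
  have idem_apply : ∀ (T : H →L[ℂ] H), IsIdempotentElem T → ∀ z : H, T (T z) = T z := by
    intro T hTid z
    have := congrArg (fun S : H →L[ℂ] H => S z) hTid
    simpa [ContinuousLinearMap.mul_apply] using this
  have proj_inner : ∀ (T : H →L[ℂ] H), IsSelfAdjoint T → IsIdempotentElem T →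
      ∀ z : H, (⟪T z, z⟫) = ((‖T z‖ ^ 2 : ℝ) : ℂ) := by
    intro T hT hTid z
    calc (⟪T z, z⟫) = (⟪T (T z), z⟫) := by rw [idem_apply T hTid z]
      _ = (⟪T z, T z⟫) := hsa T hT (T z) z
      _ = ((‖T z‖ ^ 2 : ℝ) : ℂ) := by
          rw [inner_self_eq_norm_sq_to_K]; norm_num
  have key : ∀ y : H, Q (N y) = 0 ∧ P (N y) = N y := by
    intro y
    set z := N y with hz
    have hNz : N z = z := idem_apply N hNid y
    have hy := congrArg (fun S : H →L[ℂ] H => (⟪S y, y⟫)) h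
    simp only [ContinuousLinearMap.mul_apply, ContinuousLinearMap.neg_apply,
      ContinuousLinearMap.sub_apply, inner_neg_left] at hy
    rw [hsa N hNsa, ← hz] at hy
    have hny : (⟪z, y⟫) = ((‖z‖ ^ 2 : ℝ) : ℂ) := by
      calc (⟪z, y⟫) = (⟪N z, y⟫) := by rw [hNz]
        _ = (⟪z, N y⟫) := hsa N hNsa z y
        _ = (⟪z, z⟫) := by rw [← hz]
        _ = ((‖z‖ ^ 2 : ℝ) : ℂ) := by rw [inner_self_eq_norm_sq_to_K]; norm_num
    rw [inner_sub_left, proj_inner Q hQsa hQid z, proj_inner P hPsa hPid z, hny] at hy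
    have hre : (‖Q z‖ ^ 2 : ℝ) - ‖P z‖ ^ 2 = -(‖z‖ ^ 2) := by
      exact_mod_cast congrArg Complex.re hy
    have hPle : ‖P z‖ ^ 2 ≤ ‖P z‖ * ‖z‖ := by
      have h1 : ‖(⟪P z, z⟫ : ℂ)‖ ≤ ‖P z‖ * ‖z‖ := norm_inner_le_norm _ _
      rw [proj_inner P hPsa hPid z, Complex.norm_real, Real.norm_eq_abs,
        abs_of_nonneg (sq_nonneg _)] at h1
      exact h1
    have hQz : ‖Q z‖ = 0 := by
      nlinarith [norm_nonneg (Q z), norm_nonneg (P z), norm_nonneg z, sq_nonneg (‖P z‖ - ‖z‖)]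
    have hPz : ‖P z‖ ^ 2 = ‖z‖ ^ 2 := by nlinarith
    constructor
    · exact norm_eq_zero.mp hQz
    · have hzero : ‖z - P z‖ ^ 2 = 0 := by
        have hexp := @norm_sub_sq ℂ _ _ _ _ z (P z)
        have hre2 : RCLike.re (⟪z, P z⟫ : ℂ) = ‖P z‖ ^ 2 := by
          rw [← inner_conj_symm, proj_inner P hPsa hPid z]
          simp [← Complex.ofReal_pow]
        rw [hexp, hre2, hPz]
        ring
      have h1 := (pow_eq_zero_iff (two_ne_zero)).mp hzero
      have h2 := norm_eq_zero.mp h1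
      exact (sub_eq_zero.mp h2).symm
  have hQN : Q * N = 0 := by
    ext y
    simpa [ContinuousLinearMap.mul_apply] using (key y).1
  have hPN : P * N = N := by
    ext y
    simpa [ContinuousLinearMap.mul_apply] using (key y).2
  refine ⟨hQN, ?_, hPN, ?_⟩
  · have h2 : N * Q = star (Q * N) := by
      rw [star_mul, hNsa.star_eq, hQsa.star_eq]
    rw [h2, hQN, star_zero]
  · have h2 : N * P = star (P * N) := by
      rw [star_mul, hNsa.star_eq, hPsa.star_eq]
    rw [h2, hPN, hNsa.star_eq]
end

section
/- Let Q and P be orthogonal projections on a Hilbert space such that Q - P is trace class, and let N₊, N₋ be the orthogonal projections onto ker(Q - P - I) and ker(Q - P + I) respectively (both finite rank). Then Q̃ := Q - N₊ + N₋ is an orthogonal projection. -/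
/-!
If `(Q - P) N = N` for projections `P`, `Q`, multiplying by `Q` gives `QPN = 0` and multiplying
by `P` gives `PQN = 2 PN`; hence `N* P N = ½ N* (PQN) = 0`, and the C⋆-identity turns
`(PN)* (PN) = N* P N = 0` into `PN = 0`. So `N₊` is a subprojection of `Q` and `N₋` is
orthogonal to `Q`, which makes `Q - N₊ + N₋` a sum of two orthogonal projections with
orthogonal ranges.
-/

open scoped ComplexInnerProductSpace

/-- The absolute value `|A| = sqrt(A*A)` of a bounded operator on a Hilbert space. -/
noncomputable def absCLM {H : Type*} [NormedAddCommGroup H] [InnerProductSpace ℂ H]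
    [CompleteSpace H] (A : H →L[ℂ] H) : H →L[ℂ] H :=
  CFC.sqrt (star A * A)

namespace IsStarProjection

theorem sub_add_of_mul_eq_of_mul_eq_zero {R : Type*} [NonUnitalRing R] [StarRing R] {p q r : R}
    (hp : IsStarProjection p) (hq : IsStarProjection q) (hr : IsStarProjection r)
    (hqp : q * p = p) (hqr : q * r = 0) : IsStarProjection (q - p + r) := by
  have hpq : p * q = p := by
    simpa [hp.isSelfAdjoint.star_eq, hq.isSelfAdjoint.star_eq] using congr(star $hqp)
  refine (hp.sub_of_mul_eq_left hq hpq).add hr ?_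
  rw [sub_mul, hqr, ← hpq, mul_assoc, hqr, mul_zero, sub_zero]

variable {A : Type*} [NonUnitalNormedRing A] [StarRing A] [CStarRing A] [IsAddTorsionFree A]
  {p q n : A}

theorem mul_eq_zero_of_sub_mul_eq_self (hp : IsStarProjection p) (hq : IsStarProjection q)
    (h : (q - p) * n = n) : p * n = 0 := by
  have hqpn : q * p * n = 0 := by
    have := congr(q * $h)
    rw [← mul_assoc, mul_sub, hq.isIdempotentElem.eq, sub_mul, mul_assoc, sub_eq_self] at this
    rwa [mul_assoc]
  have hpqn : p * q * n = 2 • (p * n) := by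
    have := congr(p * $h)
    rw [← mul_assoc, mul_sub, hp.isIdempotentElem.eq, sub_mul, sub_eq_iff_eq_add] at this
    rw [this, two_nsmul]
  have hnpqn : star n * (p * q * n) = 0 := by
    have := congr(star $hqpn)
    rw [star_mul, star_mul, hp.isSelfAdjoint.star_eq, hq.isSelfAdjoint.star_eq, star_zero] at this
    rw [← mul_assoc, ← mul_assoc, mul_assoc _ p, this, zero_mul]
  rw [← CStarRing.star_mul_self_eq_zero_iff, star_mul, hp.isSelfAdjoint.star_eq, mul_assoc,
    ← mul_assoc p, hp.isIdempotentElem.eq, ← two_nsmul_eq_zero, ← mul_smul_comm, ← hpqn, hnpqn]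

theorem mul_eq_self_of_sub_mul_eq_self (hp : IsStarProjection p) (hq : IsStarProjection q)
    (h : (q - p) * n = n) : q * n = n := by
  calc q * n = (q - p) * n + p * n := by rw [sub_mul, sub_add_cancel]
    _ = n := by rw [h, hp.mul_eq_zero_of_sub_mul_eq_self hq h, add_zero]

end IsStarProjection

theorem ContinuousLinearMap.mul_eq_zero_of_range_le_ker {R M : Type*} [Semiring R]
    [AddCommMonoid M] [TopologicalSpace M] [Module R M] {f g : M →L[R] M}
    (h : LinearMap.range (g : M →ₗ[R] M) ≤ LinearMap.ker (f : M →ₗ[R] M)) : f * g = 0 := by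
  ext x
  exact h (LinearMap.mem_range_self _ x)

theorem modified_projection_is_projection_general
    {H : Type*} [NormedAddCommGroup H] [InnerProductSpace ℂ H] [CompleteSpace H]
    (Q P Np Nm : H →L[ℂ] H)
    (hQsa : IsSelfAdjoint Q) (hQid : IsIdempotentElem Q)
    (hPsa : IsSelfAdjoint P) (hPid : IsIdempotentElem P)
    (hNpsa : IsSelfAdjoint Np) (hNpid : IsIdempotentElem Np)
    (hNmsa : IsSelfAdjoint Nm) (hNmid : IsIdempotentElem Nm)
    (hNprange : LinearMap.range (Np : H →ₗ[ℂ] H) = LinearMap.ker ((Q - P - 1 : H →L[ℂ] H) : H →ₗ[ℂ] H))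
    (hNmrange : LinearMap.range (Nm : H →ₗ[ℂ] H) = LinearMap.ker ((Q - P + 1 : H →L[ℂ] H) : H →ₗ[ℂ] H)) :
    IsSelfAdjoint (Q - Np + Nm) ∧ IsIdempotentElem (Q - Np + Nm) := by
  have : IsAddTorsionFree (H →L[ℂ] H) := .of_isTorsionFree ℂ _
  have hQ : IsStarProjection Q := ⟨hQid, hQsa⟩
  have hP : IsStarProjection P := ⟨hPid, hPsa⟩
  have hNp : (Q - P) * Np = Np := by
    have := ContinuousLinearMap.mul_eq_zero_of_range_le_ker hNprange.le
    rwa [sub_mul, one_mul, sub_eq_zero] at this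
  have hNm : (P - Q) * Nm = Nm := by
    have := ContinuousLinearMap.mul_eq_zero_of_range_le_ker hNmrange.le
    rw [add_mul, one_mul, add_eq_zero_iff_eq_neg] at this
    rw [← neg_sub, neg_mul, this, neg_neg]
  have hQNp : Q * Np = Np := hP.mul_eq_self_of_sub_mul_eq_self hQ hNp
  have hQNm : Q * Nm = 0 := hQ.mul_eq_zero_of_sub_mul_eq_self hP hNm
  have hQtilde := IsStarProjection.sub_add_of_mul_eq_of_mul_eq_zero
    ⟨hNpid, hNpsa⟩ hQ ⟨hNmid, hNmsa⟩ hQNp hQNm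
  exact ⟨hQtilde.isSelfAdjoint, hQtilde.isIdempotentElem⟩

/-- Let `Q`, `P` be orthogonal projections with `Q - P` trace class (encoded: the diagonal
of `|Q - P|` in a Hilbert basis is summable), and let `N₊`, `N₋` be the orthogonal
projections onto `ker(Q - P - I)` and `ker(Q - P + I)`. Then `Q̃ = Q - N₊ + N₋` is an
orthogonal projection. -/
theorem modified_projection_is_projection
    {ι H : Type*} [NormedAddCommGroup H] [InnerProductSpace ℂ H] [CompleteSpace H]
    (b : HilbertBasis ι ℂ H)
    (Q P Np Nm : H →L[ℂ] H)
    (hQsa : IsSelfAdjoint Q) (hQid : IsIdempotentElem Q)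
    (hPsa : IsSelfAdjoint P) (hPid : IsIdempotentElem P)
    (htc : Summable fun i => (⟪b i, absCLM (Q - P) (b i)⟫).re)
    (hNpsa : IsSelfAdjoint Np) (hNpid : IsIdempotentElem Np)
    (hNmsa : IsSelfAdjoint Nm) (hNmid : IsIdempotentElem Nm)
    (hNprange : LinearMap.range (Np : H →ₗ[ℂ] H) = LinearMap.ker ((Q - P - 1 : H →L[ℂ] H) : H →ₗ[ℂ] H))
    (hNmrange : LinearMap.range (Nm : H →ₗ[ℂ] H) = LinearMap.ker ((Q - P + 1 : H →L[ℂ] H) : H →ₗ[ℂ] H)) :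
    IsSelfAdjoint (Q - Np + Nm) ∧ IsIdempotentElem (Q - Np + Nm) :=
  modified_projection_is_projection_general Q P Np Nm hQsa hQid hPsa hPid hNpsa hNpid hNmsa hNmid
    hNprange hNmrange
end
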